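/- arXiv:2306.06813 — 4 statements merged into one kernel-verified Lean document; each statement's English description precedes it below -/
import Mathlib

section
/- For any nonzero vector g in R^m and any p with 0 < p < ∞, the ratio ‖g‖_{p+2}^{p+2} / (‖g‖_p^p · ‖g‖_2^2) is at least 1/m, with equality if and only if all nonzero coordinates of g have equal absolute value and g has no zero coordinates (i.e., g is a constant multiple of a vector with all entries of absolute value 1). -/
open Finset

/-!
Write `a = |g|`, `φ x = x ^ p` and `ψ x = x ^ 2`. The claim is Chebyshev's sum inequality
`(∑ φ ∘ a) (∑ ψ ∘ a) ≤ m ∑ (φ ∘ a) (ψ ∘ a)` for the two functions `φ`, `ψ`, which are strictly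
increasing on `[0, ∞)`. The defect `m ∑ (φ ∘ a)(ψ ∘ a) - (∑ φ ∘ a)(∑ ψ ∘ a)` is half the double
sum of `(φ (a i) - φ (a j)) (ψ (a i) - ψ (a j))`, whose terms are nonnegative and vanish only when
`a i = a j`; so equality holds exactly when `|g|` is constant.
-/

theorem Finset.sum_sum_sub_mul_sub {ι R : Type*} [CommRing R] (s : Finset ι) (f g : ι → R) :
    ∑ i ∈ s, ∑ j ∈ s, (f i - f j) * (g i - g j) =
      2 * (#s * ∑ i ∈ s, f i * g i - (∑ i ∈ s, f i) * ∑ i ∈ s, g i) := by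
  simp only [sub_mul, mul_sub, sum_sub_distrib, sum_const, nsmul_eq_mul, ← sum_mul, ← mul_sum]
  ring

section Chebyshev

variable {R : Type*} [CommRing R] [LinearOrder R] [IsStrictOrderedRing R]
  {S : Set R} {φ ψ : R → R}

theorem StrictMonoOn.sub_mul_sub_pos (hφ : StrictMonoOn φ S) (hψ : StrictMonoOn ψ S)
    {x y : R} (hx : x ∈ S) (hy : y ∈ S) (hxy : x ≠ y) :
    0 < (φ x - φ y) * (ψ x - ψ y) := by
  rcases hxy.lt_or_gt with h | h
  · exact mul_pos_of_neg_of_neg (sub_neg.2 (hφ hx hy h)) (sub_neg.2 (hψ hx hy h))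
  · exact mul_pos (sub_pos.2 (hφ hy hx h)) (sub_pos.2 (hψ hy hx h))

theorem StrictMonoOn.sub_mul_sub_nonneg (hφ : StrictMonoOn φ S) (hψ : StrictMonoOn ψ S)
    {x y : R} (hx : x ∈ S) (hy : y ∈ S) :
    0 ≤ (φ x - φ y) * (ψ x - ψ y) := by
  rcases eq_or_ne x y with rfl | hxy
  · simp
  · exact (hφ.sub_mul_sub_pos hψ hx hy hxy).le

variable {ι : Type*} {s : Finset ι} {a : ι → R}

theorem StrictMonoOn.sum_mul_sum_le_card_mul_sum (hφ : StrictMonoOn φ S)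
    (hψ : StrictMonoOn ψ S) (ha : ∀ i ∈ s, a i ∈ S) :
    (∑ i ∈ s, φ (a i)) * ∑ i ∈ s, ψ (a i) ≤ #s * ∑ i ∈ s, φ (a i) * ψ (a i) := by
  have h := sum_sum_sub_mul_sub s (φ ∘ a) (ψ ∘ a)
  have h0 : 0 ≤ ∑ i ∈ s, ∑ j ∈ s, (φ (a i) - φ (a j)) * (ψ (a i) - ψ (a j)) :=
    sum_nonneg fun i hi ↦ sum_nonneg fun j hj ↦ hφ.sub_mul_sub_nonneg hψ (ha i hi) (ha j hj)
  simp only [Function.comp_apply] at h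
  linarith

theorem StrictMonoOn.sum_mul_sum_eq_card_mul_sum_iff (hφ : StrictMonoOn φ S)
    (hψ : StrictMonoOn ψ S) (ha : ∀ i ∈ s, a i ∈ S) :
    (∑ i ∈ s, φ (a i)) * ∑ i ∈ s, ψ (a i) = #s * ∑ i ∈ s, φ (a i) * ψ (a i) ↔
      ∀ i ∈ s, ∀ j ∈ s, a i = a j := by
  have h := sum_sum_sub_mul_sub s (φ ∘ a) (ψ ∘ a)
  simp only [Function.comp_apply] at h
  have hterm : ∀ i ∈ s, ∀ j ∈ s, 0 ≤ (φ (a i) - φ (a j)) * (ψ (a i) - ψ (a j)) :=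
    fun i hi j hj ↦ hφ.sub_mul_sub_nonneg hψ (ha i hi) (ha j hj)
  have hsum : ∀ i ∈ s, 0 ≤ ∑ j ∈ s, (φ (a i) - φ (a j)) * (ψ (a i) - ψ (a j)) :=
    fun i hi ↦ sum_nonneg (hterm i hi)
  calc _ ↔ ∑ i ∈ s, ∑ j ∈ s, (φ (a i) - φ (a j)) * (ψ (a i) - ψ (a j)) = 0 := by
        constructor <;> intro <;> linarith
    _ ↔ ∀ i ∈ s, ∀ j ∈ s, (φ (a i) - φ (a j)) * (ψ (a i) - ψ (a j)) = 0 := by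
        rw [sum_eq_zero_iff_of_nonneg hsum]
        exact forall₂_congr fun i hi ↦ sum_eq_zero_iff_of_nonneg (hterm i hi)
    _ ↔ ∀ i ∈ s, ∀ j ∈ s, a i = a j := by
        refine forall₂_congr fun i hi ↦ forall₂_congr fun j hj ↦
          ⟨fun h0 ↦ ?_, fun hij ↦ by simp [hij]⟩
        by_contra hij
        exact (hφ.sub_mul_sub_pos hψ (ha i hi) (ha j hj) hij).ne' h0

end Chebyshev

/-- For nonzero `g : ℝ^m` and `0 < p`,
`‖g‖_{p+2}^{p+2} / (‖g‖_p^p · ‖g‖_2^2) ≥ 1/m`, with equality iff all coordinates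
of `g` have the same (nonzero) absolute value. -/
theorem stmt2 (m : ℕ) (p : ℝ) (hp : 0 < p) (g : Fin m → ℝ) (hg : g ≠ 0) :
    (1 : ℝ) / m ≤
      (∑ i, |g i| ^ (p + 2)) / ((∑ i, |g i| ^ p) * (∑ i, g i ^ 2)) ∧
    ((∑ i, |g i| ^ (p + 2)) / ((∑ i, |g i| ^ p) * (∑ i, g i ^ 2)) = 1 / m ↔
      ∃ c : ℝ, 0 < c ∧ ∀ i, |g i| = c) := by
  obtain ⟨k, hgk⟩ := Function.ne_iff.1 hg
  have hk : 0 < |g k| := abs_pos.2 hgk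
  have hm : (0 : ℝ) < m := Nat.cast_pos.2 k.pos
  have hφ := Real.strictMonoOn_rpow_Ici_of_exponent_pos hp
  have hψ : StrictMonoOn (fun x : ℝ ↦ x ^ 2) (Set.Ici 0) := pow_left_strictMonoOn₀ two_ne_zero
  have ha : ∀ i ∈ (univ : Finset (Fin m)), |g i| ∈ Set.Ici 0 := fun i _ ↦ abs_nonneg (g i)
  have hpow : ∀ i, |g i| ^ (p + 2) = |g i| ^ p * |g i| ^ 2 := fun i ↦ by
    exact_mod_cast Real.rpow_add_natCast' (abs_nonneg (g i)) (n := 2) (by positivity)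
  have hpos : 0 < (∑ i, |g i| ^ p) * ∑ i, g i ^ 2 := mul_pos
    (sum_pos' (fun i _ ↦ by positivity) ⟨k, mem_univ k, by positivity⟩)
    (sum_pos' (fun i _ ↦ sq_nonneg _) ⟨k, mem_univ k, by rw [← sq_abs]; positivity⟩)
  simp only [← sq_abs (g _), hpow] at hpos ⊢
  have hcheb := hφ.sum_mul_sum_le_card_mul_sum hψ ha
  have heq := hφ.sum_mul_sum_eq_card_mul_sum_iff hψ ha
  simp only [card_univ, Fintype.card_fin] at hcheb heq
  refine ⟨by rw [div_le_div_iff₀ hm hpos]; linarith, ?_⟩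
  rw [div_eq_div_iff hpos.ne' hm.ne', one_mul, mul_comm _ (m : ℝ), eq_comm, heq]
  exact ⟨fun h ↦ ⟨|g k|, hk, fun i ↦ h i (mem_univ i) k (mem_univ k)⟩,
    fun ⟨c, _, hc⟩ i _ j _ ↦ (hc i).trans (hc j).symm⟩
end

section
/- Let d_1, ..., d_n ≥ 0 be nonnegative reals. Then the function f(x) = (∑_{i=1}^n e^{d_i(x+2)}) / (∑_{i=1}^n e^{d_i x}) is monotonically nondecreasing on (0, ∞). -/
/-!
With `S(x) = ∑ i, exp (d i * x)`, monotonicity of `S(x + t) / S(x)` cross-multiplies to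
`S(x + t) S(y) ≤ S(y + t) S(x)` for `x ≤ y`, `0 ≤ t`, which expands into
a double sum whose `(i, j)` and `(j, i)` terms together change by
`(exp (d j x + d i y) - exp (d i x + d j y)) (exp (t d i) - exp (t d j)) ≥ 0`:
both factors have the sign of `d i - d j`.
-/

open Finset Real

lemma exp_sub_exp_mul_exp_sub_exp_nonneg {p q r s : ℝ} (h : 0 ≤ (p - q) * (r - s)) :
    0 ≤ (exp p - exp q) * (exp r - exp s) := by
  rcases mul_nonneg_iff.1 h with ⟨hpq, hrs⟩ | ⟨hpq, hrs⟩
  · exact mul_nonneg (sub_nonneg.2 (exp_le_exp.2 (by linarith)))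
      (sub_nonneg.2 (exp_le_exp.2 (by linarith)))
  · exact mul_nonneg_of_nonpos_of_nonpos (sub_nonpos.2 (exp_le_exp.2 (by linarith)))
      (sub_nonpos.2 (exp_le_exp.2 (by linarith)))

lemma exp_mul_add_exp_mul_le (a b t : ℝ) {x y : ℝ} (ht : 0 ≤ t) (hxy : x ≤ y) :
    exp (a * (x + t)) * exp (b * y) + exp (b * (x + t)) * exp (a * y)
      ≤ exp (a * (y + t)) * exp (b * x) + exp (b * (y + t)) * exp (a * x) := by
  have key := exp_sub_exp_mul_exp_sub_exp_nonneg (p := b * x + a * y) (q := a * x + b * y)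
    (r := t * a) (s := t * b) (by nlinarith [mul_nonneg ht (sub_nonneg.2 hxy), sq_nonneg (a - b)])
  simp only [← exp_add]
  have e1 := exp_add (b * x + a * y) (t * a)
  have e2 := exp_add (a * x + b * y) (t * a)
  have e3 := exp_add (b * x + a * y) (t * b)
  have e4 := exp_add (a * x + b * y) (t * b)
  ring_nf at e1 e2 e3 e4 key ⊢
  linarith

lemma Finset.sum_sum_le_of_add_swap_le {ι : Type*} (s : Finset ι) {f g : ι → ι → ℝ}
    (h : ∀ i ∈ s, ∀ j ∈ s, f i j + f j i ≤ g i j + g j i) :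
    ∑ i ∈ s, ∑ j ∈ s, f i j ≤ ∑ i ∈ s, ∑ j ∈ s, g i j := by
  have two_mul_eq (F : ι → ι → ℝ) :
      2 * ∑ i ∈ s, ∑ j ∈ s, F i j = ∑ i ∈ s, ∑ j ∈ s, (F i j + F j i) := by
    simp only [sum_add_distrib, sum_comm (f := fun i j => F j i)]
    ring
  have := sum_le_sum fun i hi => sum_le_sum fun j hj => h i hi j hj
  linarith [two_mul_eq f, two_mul_eq g]

lemma sum_exp_mul_add_mul_sum_exp_le {ι : Type*} (s : Finset ι) (d : ι → ℝ) {t x y : ℝ}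
    (ht : 0 ≤ t) (hxy : x ≤ y) :
    (∑ i ∈ s, exp (d i * (x + t))) * ∑ i ∈ s, exp (d i * y)
      ≤ (∑ i ∈ s, exp (d i * (y + t))) * ∑ i ∈ s, exp (d i * x) := by
  rw [sum_mul_sum, sum_mul_sum]
  exact s.sum_sum_le_of_add_swap_le fun i _ j _ => exp_mul_add_exp_mul_le (d i) (d j) t ht hxy

theorem monotone_sum_exp_mul_add_div_sum_exp {ι : Type*} (s : Finset ι) (d : ι → ℝ) {t : ℝ}
    (ht : 0 ≤ t) :
    Monotone fun x => (∑ i ∈ s, exp (d i * (x + t))) / ∑ i ∈ s, exp (d i * x) := by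
  intro x y hxy
  rcases s.eq_empty_or_nonempty with rfl | hs
  · simp
  have hpos (z : ℝ) : 0 < ∑ i ∈ s, exp (d i * z) := sum_pos (fun i _ => exp_pos _) hs
  exact (div_le_div_iff₀ (hpos x) (hpos y)).2 (sum_exp_mul_add_mul_sum_exp_le s d ht hxy)

theorem stmt3_general (n : ℕ) (d : Fin n → ℝ) :
    MonotoneOn
      (fun x : ℝ => (∑ i, Real.exp (d i * (x + 2))) / (∑ i, Real.exp (d i * x)))
      (Set.Ioi (0 : ℝ)) :=
  (monotone_sum_exp_mul_add_div_sum_exp univ d zero_le_two).monotoneOn _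

/-- For nonnegative `d_1,…,d_n`, the function
`x ↦ (∑ i, e^{d_i(x+2)}) / (∑ i, e^{d_i x})` is monotonically nondecreasing on `(0,∞)`. -/
theorem stmt3 (n : ℕ) (d : Fin n → ℝ) (hd : ∀ i, 0 ≤ d i) :
    MonotoneOn
      (fun x : ℝ => (∑ i, Real.exp (d i * (x + 2))) / (∑ i, Real.exp (d i * x)))
      (Set.Ioi (0 : ℝ)) :=
  stmt3_general n d
end

section
/- For nonnegative reals d_1, ..., d_n and any x > 0, the double sum ∑_{i=1}^n ∑_{j=1}^n (d_i - d_j) e^{2 d_i} e^{(d_i + d_j) x} is nonnegative. -/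
/-!
Swapping `i` and `j` and averaging turns the sum into half of
`∑ i, ∑ j, (d i - d j) * (exp (2 d i) - exp (2 d j)) * exp ((d i + d j) x)`, whose terms are
nonnegative because `d` and `exp (2 d)` are similarly ordered and the weight is symmetric.
-/

open Finset

section Symmetrization

variable {ι R : Type*} [Fintype ι]

lemma two_mul_sum_sum_sub_mul_eq [CommRing R] (f g : ι → R) {w : ι → ι → R}
    (hw : ∀ i j, w i j = w j i) :
    2 * ∑ i, ∑ j, (f i - f j) * g i * w i j = ∑ i, ∑ j, (f i - f j) * (g i - g j) * w i j := by
  have hswap : ∑ i, ∑ j, (f i - f j) * g i * w i j = ∑ i, ∑ j, (f j - f i) * g j * w i j := by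
    rw [sum_comm]
    simp_rw [hw]
  calc 2 * ∑ i, ∑ j, (f i - f j) * g i * w i j
      = ∑ i, ∑ j, (f i - f j) * g i * w i j + ∑ i, ∑ j, (f j - f i) * g j * w i j := by
        rw [two_mul, ← hswap]
    _ = ∑ i, ∑ j, (f i - f j) * (g i - g j) * w i j := by
        simp_rw [← sum_add_distrib]
        congr! 2
        ring

lemma Monovary.sum_sum_sub_mul_nonneg [CommRing R] [LinearOrder R] [IsStrictOrderedRing R]
    {f g : ι → R} (hfg : Monovary f g) {w : ι → ι → R} (hw₀ : ∀ i j, 0 ≤ w i j)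
    (hw : ∀ i j, w i j = w j i) :
    0 ≤ ∑ i, ∑ j, (f i - f j) * g i * w i j := by
  have htwice : 0 ≤ 2 * ∑ i, ∑ j, (f i - f j) * g i * w i j := by
    rw [two_mul_sum_sum_sub_mul_eq f g hw]
    exact sum_nonneg fun i _ ↦ sum_nonneg fun j _ ↦
      mul_nonneg (hfg.sub_mul_sub_nonneg j i) (hw₀ i j)
  exact (mul_nonneg_iff_of_pos_left two_pos).mp htwice

end Symmetrization

theorem stmt4_general (n : ℕ) (d : Fin n → ℝ) (x : ℝ) :
    0 ≤ ∑ i, ∑ j, (d i - d j) * Real.exp (2 * d i) * Real.exp ((d i + d j) * x) := by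
  have hmono : Monotone fun t : ℝ ↦ Real.exp (2 * t) :=
    fun _ _ hab ↦ Real.exp_le_exp.2 (by linarith)
  exact ((monovary_self d).comp_monotone_left hmono).symm.sum_sum_sub_mul_nonneg
    (fun _ _ ↦ (Real.exp_pos _).le) (fun i j ↦ by rw [add_comm])

/-- For nonnegative `d_1,…,d_n` and `x > 0`,
`∑ i ∑ j (d_i − d_j) e^{2 d_i} e^{(d_i + d_j) x} ≥ 0`. -/
theorem stmt4 (n : ℕ) (d : Fin n → ℝ) (hd : ∀ i, 0 ≤ d i) (x : ℝ) (hx : 0 < x) :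
    0 ≤ ∑ i, ∑ j, (d i - d j) * Real.exp (2 * d i) * Real.exp ((d i + d j) * x) :=
  stmt4_general n d x
end

section
/- Let f: R^n → R be α-strongly convex, a ∈ R^n nonzero, β ∈ R, and let H = {x : ⟨a,x⟩ = β}. Let x ∈ R^n, x* ∈ ∂f(x), and let t̂ minimize t ↦ f*(x* − a t) + tβ over R. Set z* = x* − t̂ a and z = ∇f*(z*). Then z ∈ H and for all y ∈ H: D_f^{z*}(z, y) ≤ D_f^{x*}(x, y) − (α/2)·(⟨a,x⟩ − β)^2/‖a‖_2^2. -/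
/-!
A quadratic minorant of `f` at `z` with slope `z*` and curvature `α` turns into the quadratic
majorant `f*(w) ≤ ⟪w, z⟫ - f z + ‖w - z*‖² / (2α)` of the conjugate, with equality at `w = z*`.
Hence `s ↦ f*(z* - s a) + s β` has a majorant touching it at `s = 0` with slope `β - ⟪a, z⟫`;
since `t̂` is optimal, `s = 0` is a minimum, which forces `⟪a, z⟫ = β`. Then `z* - x*` is
orthogonal to `H - z`, the two Bregman divergences differ by `D_f^{x*}(x, z) ≥ (α/2)‖z - x‖²`,
and Cauchy–Schwarz gives `‖a‖ ‖z - x‖ ≥ |⟪a, z - x⟫| = |⟪a, x⟫ - β|`.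
-/

open scoped RealInnerProductSpace

theorem eq_zero_of_forall_nonneg_mul_add_mul_sq {c K : ℝ} (hK : 0 < K)
    (h : ∀ s : ℝ, 0 ≤ s * c + K * s ^ 2) : c = 0 := by
  have hs := h (-c / (2 * K))
  have hvalue : -c / (2 * K) * c + K * (-c / (2 * K)) ^ 2 = -(c ^ 2 / (4 * K)) := by
    field_simp
    ring
  rw [hvalue, neg_nonneg, div_le_iff₀ (by positivity), zero_mul] at hs
  exact pow_eq_zero_iff two_ne_zero |>.mp <| le_antisymm hs (sq_nonneg c)

section InnerProductSpace

variable {E : Type*} [NormedAddCommGroup E] [InnerProductSpace ℝ E]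

theorem sq_inner_div_norm_sq_le (a v : E) : ⟪a, v⟫ ^ 2 / ‖a‖ ^ 2 ≤ ‖v‖ ^ 2 := by
  rcases eq_or_ne a 0 with rfl | ha
  · simp
  rw [div_le_iff₀ (by positivity), mul_comm, ← mul_pow, ← sq_abs]
  exact pow_le_pow_left₀ (abs_nonneg _) (abs_real_inner_le_norm a v) 2

noncomputable def fenchelConjugate (f : E → ℝ) (w : E) : ℝ :=
  sSup (Set.range fun u => ⟪w, u⟫ - f u)

variable {f : E → ℝ} {α : ℝ} {z zs : E}

theorem inner_sub_le_of_quadratic_minorant (hα : 0 < α)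
    (hq : ∀ u, f z + ⟪zs, u - z⟫ + α / 2 * ‖u - z‖ ^ 2 ≤ f u) (w u : E) :
    ⟪w, u⟫ - f u ≤ ⟪w, z⟫ - f z + ‖w - zs‖ ^ 2 / (2 * α) := by
  have hcs : ⟪w - zs, u - z⟫ ≤ ‖w - zs‖ * ‖u - z‖ := real_inner_le_norm _ _
  have hamgm : ‖w - zs‖ * ‖u - z‖ - α / 2 * ‖u - z‖ ^ 2 ≤ ‖w - zs‖ ^ 2 / (2 * α) := by
    rw [le_div_iff₀ (by positivity)]
    nlinarith [sq_nonneg (α * ‖u - z‖ - ‖w - zs‖)]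
  simp only [inner_sub_left, inner_sub_right] at hcs hq
  linarith [hq u]

theorem fenchelConjugate_le_of_quadratic_minorant (hα : 0 < α)
    (hq : ∀ u, f z + ⟪zs, u - z⟫ + α / 2 * ‖u - z‖ ^ 2 ≤ f u) (w : E) :
    fenchelConjugate f w ≤ ⟪w, z⟫ - f z + ‖w - zs‖ ^ 2 / (2 * α) :=
  csSup_le (Set.range_nonempty _) <| Set.forall_mem_range.mpr <|
    inner_sub_le_of_quadratic_minorant hα hq w

theorem fenchelConjugate_eq_of_quadratic_minorant (hα : 0 < α)
    (hq : ∀ u, f z + ⟪zs, u - z⟫ + α / 2 * ‖u - z‖ ^ 2 ≤ f u) :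
    fenchelConjugate f zs = ⟪zs, z⟫ - f z := by
  refine le_antisymm (by simpa using fenchelConjugate_le_of_quadratic_minorant hα hq zs) ?_
  refine le_csSup ⟨⟪zs, z⟫ - f z + ‖zs - zs‖ ^ 2 / (2 * α), ?_⟩ ⟨z, rfl⟩
  exact Set.forall_mem_range.mpr <| inner_sub_le_of_quadratic_minorant hα hq zs

theorem inner_eq_of_isMin_fenchelConjugate_line (hα : 0 < α)
    (hq : ∀ u, f z + ⟪zs, u - z⟫ + α / 2 * ‖u - z‖ ^ 2 ≤ f u) {a : E} (ha : a ≠ 0) {β : ℝ}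
    (hmin : ∀ s : ℝ, fenchelConjugate f zs ≤ fenchelConjugate f (zs - s • a) + s * β) :
    ⟪a, z⟫ = β := by
  refine (sub_eq_zero.mp ?_).symm
  refine eq_zero_of_forall_nonneg_mul_add_mul_sq (K := ‖a‖ ^ 2 / (2 * α)) (by positivity)
    fun s => ?_
  have hbound := fenchelConjugate_le_of_quadratic_minorant hα hq (zs - s • a)
  rw [sub_sub_cancel_left, norm_neg, norm_smul, mul_pow, Real.norm_eq_abs, sq_abs,
    inner_sub_left, real_inner_smul_left] at hbound
  have hmin_s := hmin s
  rw [fenchelConjugate_eq_of_quadratic_minorant hα hq] at hmin_s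
  linarith [show s ^ 2 * ‖a‖ ^ 2 / (2 * α) = ‖a‖ ^ 2 / (2 * α) * s ^ 2 by ring]

end InnerProductSpace

/-- Bregman projection onto a hyperplane: with `f` `α`-strongly convex, `a ≠ 0`,
`t̂` minimizing `t ↦ f*(x* − t a) + t β`, `z* = x* − t̂ a` and `z = ∇f*(z*)`
(equivalently `z* ∈ ∂f(z)`), the point `z` lies on `H(a, β)` and for every
`y ∈ H(a, β)` we have
`D_f^{z*}(z,y) ≤ D_f^{x*}(x,y) − (α/2)(⟨a,x⟩ − β)²/‖a‖²`. -/
theorem stmt12 (n : ℕ) (α : ℝ) (hα : 0 < α) (f : EuclideanSpace ℝ (Fin n) → ℝ)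
    (hsc : ∀ x y g : EuclideanSpace ℝ (Fin n),
      (∀ z, f x + ⟪g, z - x⟫ ≤ f z) →
        f x + ⟪g, y - x⟫ + α / 2 * ‖y - x‖ ^ 2 ≤ f y)
    (fstar : EuclideanSpace ℝ (Fin n) → ℝ)
    (hfstar : ∀ y, fstar y = sSup (Set.range fun u => ⟪y, u⟫ - f u))
    (a : EuclideanSpace ℝ (Fin n)) (ha : a ≠ 0) (β : ℝ)
    (x xs : EuclideanSpace ℝ (Fin n))
    (hxs : ∀ z, f x + ⟪xs, z - x⟫ ≤ f z)
    (that : ℝ)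
    (hthat : ∀ t : ℝ, fstar (xs - that • a) + that * β ≤ fstar (xs - t • a) + t * β)
    (z zs : EuclideanSpace ℝ (Fin n)) (hzs : zs = xs - that • a)
    (hz : ∀ u, f z + ⟪zs, u - z⟫ ≤ f u) :
    ⟪a, z⟫ = β ∧
    ∀ y : EuclideanSpace ℝ (Fin n), ⟪a, y⟫ = β →
      f y - f z - ⟪zs, y - z⟫ ≤
        f y - f x - ⟪xs, y - x⟫ - α / 2 * (⟪a, x⟫ - β) ^ 2 / ‖a‖ ^ 2 := by
  obtain rfl : fstar = fenchelConjugate f := funext hfstar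
  have hzH : ⟪a, z⟫ = β := by
    refine inner_eq_of_isMin_fenchelConjugate_line hα (hsc z · zs hz) ha fun s => ?_
    have hline : xs - (that + s) • a = zs - s • a := by rw [hzs, add_smul, sub_sub]
    have hopt := hthat (that + s)
    rw [hline, ← hzs] at hopt
    linarith
  refine ⟨hzH, fun y hy => ?_⟩
  have hgap : α / 2 * (⟪a, x⟫ - β) ^ 2 / ‖a‖ ^ 2 ≤ α / 2 * ‖z - x‖ ^ 2 := by
    have hcs := sq_inner_div_norm_sq_le a (z - x)
    rw [inner_sub_right, hzH, ← neg_sub, neg_sq] at hcs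
    rw [mul_div_assoc]
    exact mul_le_mul_of_nonneg_left hcs (by positivity)
  have horth : ⟪zs, y - z⟫ = ⟪xs, y - z⟫ := by
    rw [hzs, inner_sub_left, real_inner_smul_left, inner_sub_right a, hy, hzH, sub_self,
      mul_zero, sub_zero]
  have hx := hsc x z xs hxs
  simp only [inner_sub_right] at horth hx ⊢
  linarith
end
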